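/- Let a₁ ≠ 0, a₂ ≠ 0, γ₁ ≠ 0 be real and ζ real. Write the Q₊ equation in solved form u_{1,1} = F(u_{0,0}, u_{0,1}, u_{1,0}). Then the Wronskian condition W_{(u_{0,1})}[F_{,u_{1,0}}, F_{,u_{0,0}}] = 0 holds identically (on the open set where F is defined) if and only if ζ = (a₁ + a₂)γ₁³/(4a₁³). -/

import Mathlib

/-!
Solving the multi-affine equation for `u₁₁` gives `F = P/Q` with `P = -B`, `Q = A` affine in each
variable. Then `∂F/∂u₁₀ = detZ/Q²` and `∂F/∂u₀₀ = detX/Q²`, where the numerators are the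
determinants of the Möbius maps `u₁₀ ↦ u₁₁` and `u₀₀ ↦ u₁₁` and no longer involve that variable.
The common factor `1/Q²` scales the Wronskian by `1/Q⁴`, so the condition becomes the vanishing
of the polynomial Wronskian `W[detZ, detX]` in `u₀₁`. That polynomial vanishes identically for
`ζ = (a₁ + a₂)γ₁³/(4a₁³)`, while at `u₀₀ = u₀₁ = 0`, `u₁₀ = ±1` it equals
`a₁ a₂² ((a₁ + a₂)γ₁³/(4a₁³) - ζ)`; one of these two points avoids `Q = 0`, because
`Q(0,0,1) + Q(0,0,-1) = 2a₁`.
-/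

open Filter Topology

/-- Coefficient of `u₁₁` in the Q₊ equation (x = u₀₀, y = u₀₁, z = u₁₀). -/
noncomputable def qPlusA (a₁ a₂ γ₁ ζ x y z : ℝ) : ℝ :=
  ζ * x * z * y + a₁ + γ₁ * x + ((a₁ + a₂) * γ₁ / (2 * a₁)) * (z + y)
    + ((a₁ + 2 * a₂) * γ₁^2 / (4 * a₁^2)) * z * y
    + ((2 * a₁ + a₂) * γ₁^2 / (4 * a₁^2)) * (z + y) * x

/-- The part of the Q₊ equation not containing `u₁₁` (x = u₀₀, y = u₀₁, z = u₁₀). -/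
noncomputable def qPlusB (a₁ a₂ γ₁ x y z : ℝ) : ℝ :=
  a₁ * x + a₂ * (z + y) + (a₂ * γ₁ / a₁) * z * y
    + ((a₁ + a₂) * γ₁ / (2 * a₁)) * (x * y + x * z)
    + ((a₁ + 2 * a₂) * γ₁^2 / (4 * a₁^2)) * x * z * y

noncomputable def wronskian (f g : ℝ → ℝ) (y : ℝ) : ℝ :=
  f y * deriv g y - g y * deriv f y

theorem HasDerivAt.wronskian {f g : ℝ → ℝ} {f' g' y : ℝ} (hf : HasDerivAt f f' y)
    (hg : HasDerivAt g g' y) : wronskian f g y = f y * g' - g y * f' := by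
  rw [_root_.wronskian, hf.deriv, hg.deriv]

theorem wronskian_congr {f₁ f₂ g₁ g₂ : ℝ → ℝ} {y : ℝ} (hf : f₁ =ᶠ[𝓝 y] f₂)
    (hg : g₁ =ᶠ[𝓝 y] g₂) : wronskian f₁ g₁ y = wronskian f₂ g₂ y := by
  rw [wronskian, wronskian, hf.eq_of_nhds, hg.eq_of_nhds, hf.deriv_eq, hg.deriv_eq]

theorem wronskian_div_div {f g φ : ℝ → ℝ} {y : ℝ} (hf : DifferentiableAt ℝ f y)
    (hg : DifferentiableAt ℝ g y) (hφ : DifferentiableAt ℝ φ y) (hφy : φ y ≠ 0) :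
    wronskian (fun s => f s / φ s) (fun s => g s / φ s) y = wronskian f g y / φ y ^ 2 := by
  rw [wronskian, wronskian, deriv_fun_div hf hφ hφy, deriv_fun_div hg hφ hφy]
  field_simp
  ring

theorem hasDerivAt_of_affine {p : ℝ → ℝ} (hp : ∀ t, p t = p 0 + (p 1 - p 0) * t) (t : ℝ) :
    HasDerivAt p (p 1 - p 0) t := by
  have h := ((hasDerivAt_id t).const_mul (p 1 - p 0)).const_add (p 0)
  rw [mul_one] at h
  exact h.congr_of_eventuallyEq (Eventually.of_forall hp)

theorem hasDerivAt_div_of_affine {p q : ℝ → ℝ} (hp : ∀ t, p t = p 0 + (p 1 - p 0) * t)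
    (hq : ∀ t, q t = q 0 + (q 1 - q 0) * t) {t : ℝ} (ht : q t ≠ 0) :
    HasDerivAt (fun s => p s / q s) ((p 1 * q 0 - p 0 * q 1) / q t ^ 2) t := by
  refine ((hasDerivAt_of_affine hp t).fun_div (hasDerivAt_of_affine hq t) ht).congr_deriv ?_
  rw [hp t, hq t]
  ring

structure IsMultiaffine (P : ℝ → ℝ → ℝ → ℝ) : Prop where
  affine_fst : ∀ x y z, P x y z = P 0 y z + (P 1 y z - P 0 y z) * x
  affine_snd : ∀ x y z, P x y z = P x 0 z + (P x 1 z - P x 0 z) * y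
  affine_thd : ∀ x y z, P x y z = P x y 0 + (P x y 1 - P x y 0) * z

/-- Determinant of the Möbius map `t ↦ P x y t / Q x y t`: the numerator of its derivative. -/
def detZ (P Q : ℝ → ℝ → ℝ → ℝ) (x y : ℝ) : ℝ := P x y 1 * Q x y 0 - P x y 0 * Q x y 1

/-- Determinant of the Möbius map `t ↦ P t y z / Q t y z`: the numerator of its derivative. -/
def detX (P Q : ℝ → ℝ → ℝ → ℝ) (y z : ℝ) : ℝ := P 1 y z * Q 0 y z - P 0 y z * Q 1 y z

section Multiaffine

variable {P Q : ℝ → ℝ → ℝ → ℝ} (hP : IsMultiaffine P) (hQ : IsMultiaffine Q)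
include hP hQ

theorem IsMultiaffine.hasDerivAt_detZ (x y : ℝ) :
    HasDerivAt (detZ P Q x)
      ((P x 1 1 - P x 0 1) * Q x y 0 + P x y 1 * (Q x 1 0 - Q x 0 0)
        - ((P x 1 0 - P x 0 0) * Q x y 1 + P x y 0 * (Q x 1 1 - Q x 0 1))) y :=
  ((hasDerivAt_of_affine (hP.affine_snd x · 1) y).mul
      (hasDerivAt_of_affine (hQ.affine_snd x · 0) y)).sub
    ((hasDerivAt_of_affine (hP.affine_snd x · 0) y).mul
      (hasDerivAt_of_affine (hQ.affine_snd x · 1) y))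

theorem IsMultiaffine.hasDerivAt_detX (y z : ℝ) :
    HasDerivAt (fun s => detX P Q s z)
      ((P 1 1 z - P 1 0 z) * Q 0 y z + P 1 y z * (Q 0 1 z - Q 0 0 z)
        - ((P 0 1 z - P 0 0 z) * Q 1 y z + P 0 y z * (Q 1 1 z - Q 1 0 z))) y :=
  ((hasDerivAt_of_affine (hP.affine_snd 1 · z) y).mul
      (hasDerivAt_of_affine (hQ.affine_snd 0 · z) y)).sub
    ((hasDerivAt_of_affine (hP.affine_snd 0 · z) y).mul
      (hasDerivAt_of_affine (hQ.affine_snd 1 · z) y))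

theorem IsMultiaffine.wronskian_deriv_div {F : ℝ → ℝ → ℝ → ℝ}
    (hF : ∀ x y z, F x y z = P x y z / Q x y z) {x y z : ℝ} (hQxyz : Q x y z ≠ 0) :
    wronskian (fun s => deriv (fun t => F x s t) z) (fun s => deriv (fun t => F t s z) x) y =
      wronskian (detZ P Q x) (fun s => detX P Q s z) y / Q x y z ^ 4 := by
  have hQy : HasDerivAt (fun s => Q x s z) (Q x 1 z - Q x 0 z) y :=
    hasDerivAt_of_affine (hQ.affine_snd x · z) y
  have hne : ∀ᶠ s in 𝓝 y, Q x s z ≠ 0 := hQy.continuousAt.eventually_ne hQxyz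
  have hFz : (fun s => deriv (fun t => F x s t) z) =ᶠ[𝓝 y]
      fun s => detZ P Q x s / Q x s z ^ 2 := by
    filter_upwards [hne] with s hs
    simp only [hF]
    exact (hasDerivAt_div_of_affine (hP.affine_thd x s) (hQ.affine_thd x s) hs).deriv
  have hFx : (fun s => deriv (fun t => F t s z) x) =ᶠ[𝓝 y]
      fun s => detX P Q s z / Q x s z ^ 2 := by
    filter_upwards [hne] with s hs
    simp only [hF]
    exact (hasDerivAt_div_of_affine (hP.affine_fst · s z) (hQ.affine_fst · s z) hs).deriv
  rw [wronskian_congr hFz hFx, wronskian_div_div (φ := fun s => Q x s z ^ 2)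
    (hP.hasDerivAt_detZ hQ x y).differentiableAt (hP.hasDerivAt_detX hQ y z).differentiableAt
    (hQy.differentiableAt.pow 2) (pow_ne_zero 2 hQxyz)]
  ring

end Multiaffine

section QPlus

variable (a₁ a₂ γ₁ ζ : ℝ)

theorem isMultiaffine_qPlusA : IsMultiaffine (qPlusA a₁ a₂ γ₁ ζ) where
  affine_fst x y z := by simp only [qPlusA]; ring
  affine_snd x y z := by simp only [qPlusA]; ring
  affine_thd x y z := by simp only [qPlusA]; ring

theorem isMultiaffine_neg_qPlusB : IsMultiaffine fun x y z => -qPlusB a₁ a₂ γ₁ x y z where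
  affine_fst x y z := by simp only [qPlusB]; ring
  affine_snd x y z := by simp only [qPlusB]; ring
  affine_thd x y z := by simp only [qPlusB]; ring

noncomputable def qPlusWronskianNum (x y z : ℝ) : ℝ :=
  wronskian (detZ (fun x y z => -qPlusB a₁ a₂ γ₁ x y z) (qPlusA a₁ a₂ γ₁ ζ) x)
    (fun s => detX (fun x y z => -qPlusB a₁ a₂ γ₁ x y z) (qPlusA a₁ a₂ γ₁ ζ) s z) y

variable {a₁ a₂ γ₁ ζ}

theorem qPlus_wronskian_eq {F : ℝ → ℝ → ℝ → ℝ}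
    (hF : ∀ x y z : ℝ, F x y z = -qPlusB a₁ a₂ γ₁ x y z / qPlusA a₁ a₂ γ₁ ζ x y z)
    {x y z : ℝ} (hA : qPlusA a₁ a₂ γ₁ ζ x y z ≠ 0) :
    deriv (fun t => F x y t) z * deriv (fun s => deriv (fun t => F t s z) x) y
        - deriv (fun t => F t y z) x * deriv (fun s => deriv (fun t => F x s t) z) y
      = qPlusWronskianNum a₁ a₂ γ₁ ζ x y z / qPlusA a₁ a₂ γ₁ ζ x y z ^ 4 :=
  (isMultiaffine_neg_qPlusB a₁ a₂ γ₁).wronskian_deriv_div (isMultiaffine_qPlusA a₁ a₂ γ₁ ζ) hF hA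

theorem qPlusWronskianNum_eq_zero (ha₁ : a₁ ≠ 0) (hζ : ζ = (a₁ + a₂) * γ₁^3 / (4 * a₁^3))
    (x y z : ℝ) : qPlusWronskianNum a₁ a₂ γ₁ ζ x y z = 0 := by
  rw [qPlusWronskianNum, ((isMultiaffine_neg_qPlusB a₁ a₂ γ₁).hasDerivAt_detZ
    (isMultiaffine_qPlusA a₁ a₂ γ₁ ζ) x y).wronskian
    ((isMultiaffine_neg_qPlusB a₁ a₂ γ₁).hasDerivAt_detX (isMultiaffine_qPlusA a₁ a₂ γ₁ ζ) y z)]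
  subst hζ
  simp only [detZ, detX, qPlusA, qPlusB]
  field_simp
  ring

theorem qPlusWronskianNum_zero_zero (ha₁ : a₁ ≠ 0) (z : ℝ) :
    qPlusWronskianNum a₁ a₂ γ₁ ζ 0 0 z
      = a₁ * a₂ ^ 2 * z ^ 2 * ((a₁ + a₂) * γ₁^3 / (4 * a₁^3) - ζ) := by
  rw [qPlusWronskianNum, ((isMultiaffine_neg_qPlusB a₁ a₂ γ₁).hasDerivAt_detZ
    (isMultiaffine_qPlusA a₁ a₂ γ₁ ζ) 0 0).wronskian
    ((isMultiaffine_neg_qPlusB a₁ a₂ γ₁).hasDerivAt_detX (isMultiaffine_qPlusA a₁ a₂ γ₁ ζ) 0 z)]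
  simp only [detZ, detX, qPlusA, qPlusB]
  field_simp
  ring

theorem exists_sq_eq_one_qPlusA_ne_zero (ha₁ : a₁ ≠ 0) :
    ∃ z : ℝ, z ^ 2 = 1 ∧ qPlusA a₁ a₂ γ₁ ζ 0 0 z ≠ 0 := by
  by_contra! h
  have h₁ := h 1 (by norm_num)
  have h₂ := h (-1) (by norm_num)
  simp only [qPlusA] at h₁ h₂
  exact ha₁ (by linear_combination (h₁ + h₂) / 2)

end QPlus

theorem stmt16_general (a₁ a₂ γ₁ ζ : ℝ) (ha₁ : a₁ ≠ 0) (ha₂ : a₂ ≠ 0)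
    (F : ℝ → ℝ → ℝ → ℝ)
    (hF : ∀ x y z : ℝ, F x y z = -qPlusB a₁ a₂ γ₁ x y z / qPlusA a₁ a₂ γ₁ ζ x y z) :
    (∀ x y z : ℝ, qPlusA a₁ a₂ γ₁ ζ x y z ≠ 0 →
      (deriv (fun t => F x y t) z)
          * deriv (fun s => deriv (fun t => F t s z) x) y
        - (deriv (fun t => F t y z) x)
          * deriv (fun s => deriv (fun t => F x s t) z) y = 0)
    ↔ ζ = (a₁ + a₂) * γ₁^3 / (4 * a₁^3) := by
  refine ⟨fun h => ?_, fun hζ x y z hA => ?_⟩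
  · obtain ⟨z, hz, hA⟩ := exists_sq_eq_one_qPlusA_ne_zero (a₂ := a₂) (γ₁ := γ₁) (ζ := ζ) ha₁
    have h₀ := h 0 0 z hA
    rw [qPlus_wronskian_eq hF hA, qPlusWronskianNum_zero_zero ha₁, hz,
      div_eq_zero_iff, or_iff_left (pow_ne_zero 4 hA)] at h₀
    have hζ := (mul_eq_zero.mp h₀).resolve_left (by simp [ha₁, ha₂])
    exact (sub_eq_zero.mp hζ).symm
  · rw [qPlus_wronskian_eq hF hA, qPlusWronskianNum_eq_zero ha₁ hζ, zero_div]

theorem stmt16 (a₁ a₂ γ₁ ζ : ℝ) (ha₁ : a₁ ≠ 0) (ha₂ : a₂ ≠ 0) (hγ : γ₁ ≠ 0)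
    (F : ℝ → ℝ → ℝ → ℝ)
    (hF : ∀ x y z : ℝ, F x y z = -qPlusB a₁ a₂ γ₁ x y z / qPlusA a₁ a₂ γ₁ ζ x y z) :
    (∀ x y z : ℝ, qPlusA a₁ a₂ γ₁ ζ x y z ≠ 0 →
      (deriv (fun t => F x y t) z)
          * deriv (fun s => deriv (fun t => F t s z) x) y
        - (deriv (fun t => F t y z) x)
          * deriv (fun s => deriv (fun t => F x s t) z) y = 0)
    ↔ ζ = (a₁ + a₂) * γ₁^3 / (4 * a₁^3) :=
  stmt16_general a₁ a₂ γ₁ ζ ha₁ ha₂ F hF
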